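/- arXiv:math/0311514 — 4 statements merged into one kernel-verified Lean document; each statement's English description precedes it below -/
import Mathlib

section
/- For every uncountable cardinal κ, every spanning set S ⊆ [κ]^ω is projective stationary. -/
open Set Cardinal

noncomputable section

/-- The first uncountable ordinal `ω₁`. -/
def omega1 : Ordinal.{0} := (Cardinal.aleph 1).ord

/-- `x ∩ ω₁` is a countable ordinal. -/
def GoodSet (x : Set Ordinal.{0}) : Prop :=
  ∃ δ < omega1, x ∩ Set.Iio omega1 = Set.Iio δ

/-- `δ_x`: the countable ordinal `x ∩ ω₁`. -/
def delta (x : Set Ordinal.{0}) : Ordinal.{0} :=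
  sInf {δ : Ordinal.{0} | x ∩ Set.Iio omega1 = Set.Iio δ}

/-- The space `[X]^ω` of countable subsets of `X` (restricted, as in the paper,
to those `x` whose intersection with `ω₁` is a countable ordinal). -/
def countPow (X : Set Ordinal.{0}) : Set (Set Ordinal.{0}) :=
  {x | x ⊆ X ∧ x.Countable ∧ GoodSet x}

/-- `C` is club in `[X]^ω`: it is cofinal and closed under unions of countable
`⊆`-increasing chains. -/
def IsClubIn (X : Set Ordinal.{0}) (C : Set (Set Ordinal.{0})) : Prop :=
  C ⊆ countPow X ∧ (∀ x ∈ countPow X, ∃ y ∈ C, x ⊆ y) ∧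
    ∀ D : Set (Set Ordinal.{0}), D ⊆ C → D.Countable → D.Nonempty →
      IsChain (· ⊆ ·) D → ⋃₀ D ∈ C

/-- `S` is stationary in `[X]^ω`: it meets every club. -/
def IsStatIn (X : Set Ordinal.{0}) (S : Set (Set Ordinal.{0})) : Prop :=
  ∀ C, IsClubIn X C → (S ∩ C).Nonempty

/-- Club subsets of `ω₁` (closed unbounded in the ordinal `ω₁`). -/
def IsClubOmega1 (C : Set Ordinal.{0}) : Prop :=
  C ⊆ Set.Iio omega1 ∧ (∀ α < omega1, ∃ β ∈ C, α < β) ∧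
    ∀ α < omega1, α ≠ 0 → (∀ β < α, ∃ γ ∈ C, β < γ ∧ γ < α) → α ∈ C

/-- Stationary subsets of `ω₁`. -/
def IsStatOmega1 (A : Set Ordinal.{0}) : Prop :=
  ∀ C, IsClubOmega1 C → (A ∩ C).Nonempty

/-- A (continuous, `δ`-increasing) `ω₁`-chain: `⟨f α : α < ω₁⟩`. -/
def IsOmega1Chain (f : Ordinal.{0} → Set Ordinal.{0}) : Prop :=
  (∀ α β, α < β → β < omega1 → f α ⊆ f β) ∧
  (∀ β < omega1, Order.IsSuccLimit β → f β = ⋃ α ∈ Set.Iio β, f α) ∧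
  (∀ α β, α < β → β < omega1 → delta (f α) < delta (f β))

/-- The space `[Y]^{ω₁}` of subsets of `Y` of cardinality `ℵ₁`. -/
def aleph1Pow (Y : Set Ordinal.{0}) : Set (Set Ordinal.{0}) :=
  {X | X ⊆ Y ∧ Cardinal.mk X = Cardinal.aleph 1}

/-- `C` is club in `[Y]^{ω₁}`: cofinal and closed under unions of
`⊆`-increasing chains of length `ω₁`. -/
def IsClubAleph1 (Y : Set Ordinal.{0}) (C : Set (Set Ordinal.{0})) : Prop :=
  C ⊆ aleph1Pow Y ∧ (∀ X ∈ aleph1Pow Y, ∃ Z ∈ C, X ⊆ Z) ∧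
    ∀ f : Ordinal.{0} → Set Ordinal.{0}, (∀ α β, α < β → β < omega1 → f α ⊆ f β) →
      (∀ α < omega1, f α ∈ C) → (⋃ α ∈ Set.Iio omega1, f α) ∈ C

/-- `S` is a local club in `[Y]^ω`: the set of `X ∈ [Y]^{ω₁}` such that
`S ∩ [X]^ω` contains a club in `[X]^ω` contains a club in `[Y]^{ω₁}`. -/
def IsLocalClub (Y : Set Ordinal.{0}) (S : Set (Set Ordinal.{0})) : Prop :=
  ∃ C, IsClubAleph1 Y C ∧ ∀ X ∈ C, ∃ D, IsClubIn X D ∧ D ⊆ S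

/-- `S` is projective stationary in `[X]^ω`. -/
def ProjStationary (X : Set Ordinal.{0}) (S : Set (Set Ordinal.{0})) : Prop :=
  ∀ A ⊆ Set.Iio omega1, IsStatOmega1 A → IsStatIn X {x ∈ S | delta x ∈ A}

/-- `S ⊆ [κ]^ω` is spanning. -/
def IsSpanning (κ : Cardinal) (S : Set (Set Ordinal.{0})) : Prop :=
  ∀ lam : Cardinal, κ ≤ lam → ∀ C, IsClubIn (Set.Iio lam.ord) C →
    ∃ D, IsClubIn (Set.Iio lam.ord) D ∧
      ∀ x ∈ D, ∃ y ∈ C, x ⊆ y ∧ delta x = delta y ∧ (y ∩ Set.Iio κ.ord) ∈ S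

/-- `S ⊆ [X]^ω` is reflective: for every club `C`, `S ∩ C` contains an `ω₁`-chain. -/
def IsReflective (X : Set Ordinal.{0}) (S : Set (Set Ordinal.{0})) : Prop :=
  ∀ C, IsClubIn X C → ∃ f, IsOmega1Chain f ∧ ∀ α < omega1, f α ∈ S ∩ C

/-- `S ⊆ [X]^ω` is full. -/
def IsFull (X : Set Ordinal.{0}) (S : Set (Set Ordinal.{0})) : Prop :=
  ∀ A ⊆ Set.Iio omega1, IsStatOmega1 A →
    ∃ B, B ⊆ A ∧ IsStatOmega1 B ∧ ∃ C, IsClubIn X C ∧ {x ∈ C | delta x ∈ B} ⊆ S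

/-- The order type of a set of ordinals. -/
def otp (s : Set Ordinal.{0}) : Ordinal.{0} :=
  sInf {o : Ordinal.{0} | Nonempty (↥s ≃o ↥(Set.Iio o))}

/-- The nonstationary ideal on `ω₁` is saturated. -/
def NSSaturated : Prop :=
  ∀ W : Set (Set Ordinal.{0}), (∀ A ∈ W, A ⊆ Set.Iio omega1 ∧ IsStatOmega1 A) →
    (∀ A ∈ W, ∀ B ∈ W, A ≠ B → ¬ IsStatOmega1 (A ∩ B)) →
    Cardinal.mk W ≤ Cardinal.aleph 1

/-! ### Auxiliary lemmas for the proof -/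

section Aux

lemma omega1_isLimit : Order.IsSuccLimit omega1 :=
  Cardinal.isSuccLimit_ord (Cardinal.aleph0_le_aleph 1)

lemma Iio_ord_inj {a b : Ordinal.{0}} (h : Set.Iio a = Set.Iio b) : a = b := by
  rcases lt_trichotomy a b with hlt | he | hlt
  · have : a ∈ Set.Iio a := by rw [h]; exact Set.mem_Iio.2 hlt
    exact absurd this (lt_irrefl a)
  · exact he
  · have : b ∈ Set.Iio b := by rw [← h]; exact Set.mem_Iio.2 hlt
    exact absurd this (lt_irrefl b)

lemma delta_eq {x : Set Ordinal.{0}} {δ : Ordinal.{0}}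
    (h : x ∩ Set.Iio omega1 = Set.Iio δ) : delta x = δ := by
  have hset : {δ' : Ordinal.{0} | x ∩ Set.Iio omega1 = Set.Iio δ'} = {δ} := by
    ext δ'
    simp only [Set.mem_setOf_eq, Set.mem_singleton_iff]
    constructor
    · intro h'
      exact (Iio_ord_inj (h.symm.trans h')).symm
    · rintro rfl; exact h
  rw [delta, hset, csInf_singleton]

lemma good_inter {x : Set Ordinal.{0}} (hx : GoodSet x) :
    x ∩ Set.Iio omega1 = Set.Iio (delta x) := by
  obtain ⟨δ, _, h⟩ := hx
  rw [delta_eq h]; exact h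

lemma good_delta_lt {x : Set Ordinal.{0}} (hx : GoodSet x) : delta x < omega1 := by
  obtain ⟨δ, hδ, h⟩ := hx
  rw [delta_eq h]; exact hδ

lemma mem_iff_lt_delta {x : Set Ordinal.{0}} (hx : GoodSet x) {γ : Ordinal.{0}}
    (hγ : γ < omega1) : γ ∈ x ↔ γ < delta x := by
  constructor
  · intro h
    have : γ ∈ Set.Iio (delta x) := good_inter hx ▸ (⟨h, hγ⟩ : γ ∈ x ∩ Set.Iio omega1)
    exact this
  · intro h
    have : γ ∈ x ∩ Set.Iio omega1 := (good_inter hx).symm ▸ (Set.mem_Iio.2 h)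
    exact this.1

lemma Iio_zero_empty : (Set.Iio (0 : Ordinal.{0})) = ∅ := by
  ext γ; simp

lemma delta_empty : delta (∅ : Set Ordinal.{0}) = 0 :=
  delta_eq (by rw [Iio_zero_empty]; simp)

lemma good_empty : GoodSet (∅ : Set Ordinal.{0}) :=
  ⟨0, omega1_isLimit.pos, by rw [Iio_zero_empty]; simp⟩

lemma countable_Iio_of_lt_omega1 {o : Ordinal.{0}} (h : o < omega1) :
    (Set.Iio o).Countable := by
  rw [← Set.countable_coe_iff, ← Cardinal.mk_le_aleph0_iff]
  have h1 : #(Set.Iio o) = Cardinal.lift.{1} o.card := Ordinal.mk_Iio_ordinal o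
  have h2 : o.card < Cardinal.aleph 1 := Cardinal.lt_ord.1 h
  have h3 : o.card ≤ Cardinal.aleph0 := by
    rwa [← Cardinal.succ_aleph0, Order.lt_succ_iff] at h2
  calc #(Set.Iio o) = Cardinal.lift.{1} o.card := h1
    _ ≤ Cardinal.lift.{1} Cardinal.aleph0 := Cardinal.lift_le.2 h3
    _ = Cardinal.aleph0 := Cardinal.lift_aleph0

/-- If `x ∈ [X]^ω` then so is `x ∪ {δ_x}`, provided `ω₁ ⊆ X`. -/
lemma union_delta_mem_countPow {X : Set Ordinal.{0}} (hX : Set.Iio omega1 ⊆ X)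
    {x : Set Ordinal.{0}} (hx : x ∈ countPow X) :
    x ∪ {delta x} ∈ countPow X := by
  obtain ⟨hxX, hxc, hxg⟩ := hx
  have hδ : delta x < omega1 := good_delta_lt hxg
  refine ⟨?_, hxc.union (Set.countable_singleton _), ?_⟩
  · intro γ hγ
    rcases hγ with hγ | hγ
    · exact hxX hγ
    · rw [Set.mem_singleton_iff] at hγ
      exact hX (Set.mem_Iio.2 (hγ ▸ hδ))
  · refine ⟨delta x + 1, ?_, ?_⟩
    · rw [Ordinal.add_one_eq_succ]
      exact omega1_isLimit.succ_lt hδ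
    · ext γ
      simp only [Set.mem_inter_iff, Set.mem_union, Set.mem_singleton_iff, Set.mem_Iio]
      rw [Ordinal.add_one_eq_succ, Order.lt_succ_iff]
      constructor
      · rintro ⟨hγ | hγ, hγω⟩
        · exact le_of_lt ((mem_iff_lt_delta hxg hγω).1 hγ)
        · exact le_of_eq hγ
      · intro hle
        rcases lt_or_eq_of_le hle with hlt | heq
        · exact ⟨Or.inl ((mem_iff_lt_delta hxg (hlt.trans hδ)).2 hlt), hlt.trans hδ⟩
        · exact ⟨Or.inr heq, heq ▸ hδ⟩

open Classical in
/-- A choice of an element of `D` extending `x ∪ {δ_x}`. -/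
def nextS (D : Set (Set Ordinal.{0})) (x : Set Ordinal.{0}) : Set Ordinal.{0} :=
  if h : ∃ y, y ∈ D ∧ x ∪ {delta x} ⊆ y then h.choose else ∅

lemma nextS_spec {X : Set Ordinal.{0}} {D : Set (Set Ordinal.{0})}
    (hD : IsClubIn X D) (hX : Set.Iio omega1 ⊆ X)
    {x : Set Ordinal.{0}} (hx : x ∈ countPow X) :
    nextS D x ∈ D ∧ x ∪ {delta x} ⊆ nextS D x := by
  have hmem : x ∪ {delta x} ∈ countPow X := union_delta_mem_countPow hX hx
  obtain ⟨y, hyD, hxy⟩ := hD.2.1 _ hmem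
  have h : ∃ y, y ∈ D ∧ x ∪ {delta x} ⊆ y := ⟨y, hyD, hxy⟩
  rw [nextS, dif_pos h]
  exact ⟨h.choose_spec.1, h.choose_spec.2⟩


/-- The canonical chain through a club `D`. -/
def chainF (D : Set (Set Ordinal.{0})) : Ordinal.{0} → Set Ordinal.{0} :=
  fun o => Ordinal.limitRecOn o (nextS D ∅) (fun _ ih => nextS D ih)
    (fun o _ ih => ⋃ β : ↥(Set.Iio o), ih β.1 β.2)

lemma chainF_zero (D : Set (Set Ordinal.{0})) : chainF D 0 = nextS D ∅ := by
  rw [chainF, Ordinal.limitRecOn_zero]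

lemma chainF_succ (D : Set (Set Ordinal.{0})) (o : Ordinal.{0}) :
    chainF D (Order.succ o) = nextS D (chainF D o) := by
  rw [chainF, Ordinal.limitRecOn_succ]
  rfl

lemma chainF_limit (D : Set (Set Ordinal.{0})) {o : Ordinal.{0}} (h : Order.IsSuccLimit o) :
    chainF D o = ⋃ β : ↥(Set.Iio o), chainF D β.1 := by
  rw [chainF, Ordinal.limitRecOn_limit _ _ _ _ h]
  rfl

/-- Main invariant of the chain. -/
lemma chainF_invariant {X : Set Ordinal.{0}} {D : Set (Set Ordinal.{0})}
    (hD : IsClubIn X D) (hX : Set.Iio omega1 ⊆ X) :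
    ∀ α, α < omega1 → chainF D α ∈ D ∧
      ∀ β < α, chainF D β ∪ {delta (chainF D β)} ⊆ chainF D α := by
  intro α
  induction α using Ordinal.induction with
  | h α ih =>
    intro hα
    rcases Ordinal.zero_or_succ_or_isSuccLimit α with h0 | ⟨β, hβ⟩ | hlim
    · subst h0
      rw [chainF_zero]
      refine ⟨(nextS_spec hD hX ⟨Set.empty_subset X, Set.countable_empty, good_empty⟩).1, ?_⟩
      intro β hβ
      exact absurd hβ (zero_le (a := β)).not_gt
    · subst hβ
      have hβω : β < omega1 := (Order.lt_succ β).trans hα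
      obtain ⟨hβD, hβmono⟩ := ih β (Order.lt_succ β) hβω
      have hβcp : chainF D β ∈ countPow X := hD.1 hβD
      obtain ⟨hnD, hnsub⟩ := nextS_spec hD hX hβcp
      rw [chainF_succ]
      refine ⟨hnD, ?_⟩
      intro γ hγ
      rcases Order.lt_succ_iff.1 hγ |>.lt_or_eq with hγβ | hγβ
      · exact (hβmono γ hγβ).trans ((Set.subset_union_left).trans hnsub)
      · subst hγβ
        exact hnsub
    · -- limit case
      have hsub : ∀ β : ↥(Set.Iio α), chainF D β.1 ∈ D := fun β => (ih β.1 β.2 (β.2.trans hα)).1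
      have hmono : ∀ β γ : Ordinal.{0}, β < γ → γ < α → chainF D β ⊆ chainF D γ := by
        intro β γ hβγ hγα
        exact ((ih γ hγα (hγα.trans hα)).2 β hβγ).trans' Set.subset_union_left
      have himg : chainF D '' Set.Iio α ⊆ D := by
        rintro _ ⟨β, hβ, rfl⟩; exact (ih β hβ (hβ.trans hα)).1
      have hcount : (chainF D '' Set.Iio α).Countable :=
        (countable_Iio_of_lt_omega1 hα).image _
      have hne : (chainF D '' Set.Iio α).Nonempty :=
        ⟨chainF D 0, Set.mem_image_of_mem _ (Set.mem_Iio.2 hlim.pos)⟩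
      have hchain : IsChain (· ⊆ ·) (chainF D '' Set.Iio α) := by
        rintro _ ⟨β, hβ, rfl⟩ _ ⟨γ, hγ, rfl⟩ _
        rcases lt_trichotomy β γ with h | h | h
        · exact Or.inl (hmono β γ h hγ)
        · subst h; exact Or.inl subset_rfl
        · exact Or.inr (hmono γ β h hβ)
      have hU : ⋃₀ (chainF D '' Set.Iio α) ∈ D := hD.2.2 _ himg hcount hne hchain
      have heq : chainF D α = ⋃₀ (chainF D '' Set.Iio α) := by
        rw [chainF_limit D hlim, Set.sUnion_image]
        ext γ
        simp only [Set.mem_iUnion, Subtype.exists, Set.mem_Iio, exists_prop]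
      refine ⟨heq ▸ hU, ?_⟩
      intro β hβ
      have hsβ : Order.succ β < α := hlim.succ_lt hβ
      have h1 : chainF D β ∪ {delta (chainF D β)} ⊆ chainF D (Order.succ β) :=
        (ih (Order.succ β) hsβ (hsβ.trans hα)).2 β (Order.lt_succ β)
      refine h1.trans ?_
      rw [heq]
      exact Set.subset_sUnion_of_mem (Set.mem_image_of_mem _ (Set.mem_Iio.2 hsβ))

/-- The key lemma: every club `D ⊆ [X]^ω` (with `ω₁ ⊆ X`) contains an element
whose delta lies in any given stationary `A ⊆ ω₁`. -/
lemma exists_mem_club_delta_mem {X : Set Ordinal.{0}} {D : Set (Set Ordinal.{0})}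
    (hD : IsClubIn X D) (hX : Set.Iio omega1 ⊆ X)
    {A : Set Ordinal.{0}} (hA : IsStatOmega1 A) :
    ∃ x ∈ D, delta x ∈ A := by
  have hinv := chainF_invariant hD hX
  set F : Ordinal.{0} → Set Ordinal.{0} := chainF D with hF
  set g : Ordinal.{0} → Ordinal.{0} := fun α => delta (F α) with hg
  have hFD : ∀ α < omega1, F α ∈ D := fun α hα => (hinv α hα).1
  have hFgood : ∀ α < omega1, GoodSet (F α) := fun α hα => (hD.1 (hFD α hα)).2.2
  have hglt : ∀ α < omega1, g α < omega1 := fun α hα => good_delta_lt (hFgood α hα)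
  have hmono : ∀ β γ : Ordinal.{0}, β < γ → γ < omega1 → g β < g γ := by
    intro β γ hβγ hγω
    have hβω : β < omega1 := hβγ.trans hγω
    have hmem : delta (F β) ∈ F γ :=
      (hinv γ hγω).2 β hβγ (Or.inr rfl)
    exact (mem_iff_lt_delta (hFgood γ hγω) (hglt β hβω)).1 hmem
  have hid : ∀ α < omega1, α ≤ g α := by
    intro α
    induction α using Ordinal.induction with
    | h α ih =>
      intro hα
      refine le_of_forall_lt fun β hβα => ?_
      exact lt_of_le_of_lt (ih β hβα (hβα.trans hα)) (hmono β α hβα hα)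
  -- characterization of g at limits
  have hchar : ∀ α : Ordinal.{0}, α < omega1 → Order.IsSuccLimit α →
      ∀ γ : Ordinal.{0}, γ < g α ↔ ∃ β < α, γ < g β := by
    intro α hα hlim γ
    have hFα : F α = ⋃ β : ↥(Set.Iio α), F β.1 := chainF_limit D hlim
    constructor
    · intro h
      have hγω : γ < omega1 := h.trans (hglt α hα)
      have hγF : γ ∈ F α := (mem_iff_lt_delta (hFgood α hα) hγω).2 h
      rw [hFα] at hγF
      obtain ⟨s, ⟨β, rfl⟩, hγs⟩ := hγF
      exact ⟨β.1, β.2, (mem_iff_lt_delta (hFgood β.1 (β.2.trans hα)) hγω).1 hγs⟩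
    · rintro ⟨β, hβα, hγβ⟩
      have hβω : β < omega1 := hβα.trans hα
      have hγω : γ < omega1 := hγβ.trans (hglt β hβω)
      have hγF : γ ∈ F β := (mem_iff_lt_delta (hFgood β hβω) hγω).2 hγβ
      have hγFα : γ ∈ F α := by
        rw [hFα]
        exact Set.mem_iUnion.2 ⟨⟨β, hβα⟩, hγF⟩
      exact (mem_iff_lt_delta (hFgood α hα) hγω).1 hγFα
  -- the set of fixed points of g is club in ω₁
  set E : Set Ordinal.{0} := {α | α < omega1 ∧ g α = α} with hE
  have hEclub : IsClubOmega1 E := by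
    refine ⟨fun α hα => hα.1, ?_, ?_⟩
    · -- unbounded
      intro α hα
      set h : ℕ → Ordinal.{0} := fun n => Nat.rec (α + 1) (fun _ ih => g ih + 1) n with hh
      have hhsucc : ∀ n, h (n + 1) = g (h n) + 1 := fun n => rfl
      have hhlt : ∀ n, h n < omega1 := by
        intro n
        induction n with
        | zero =>
          rw [show h 0 = α + 1 from rfl, Ordinal.add_one_eq_succ]
          exact omega1_isLimit.succ_lt hα
        | succ n ihn =>
          rw [hhsucc, Ordinal.add_one_eq_succ]
          exact omega1_isLimit.succ_lt (hglt _ ihn)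
      have hhmono : ∀ n, h n < h (n + 1) := by
        intro n
        rw [hhsucc]
        exact lt_of_le_of_lt (hid _ (hhlt n)) (lt_of_lt_of_le (Order.lt_succ _)
          (by rw [Ordinal.add_one_eq_succ]))
      set lam : Ordinal.{0} := ⨆ n, h n with hlam
      have hbdd : BddAbove (Set.range h) := Ordinal.bddAbove_range h
      have hle : ∀ n, h n ≤ lam := fun n => le_ciSup hbdd n
      have hlt_iff : ∀ γ, γ < lam ↔ ∃ n, γ < h n := fun γ => Ordinal.lt_iSup_iff
      have hlamω : lam < omega1 := by
        refine Ordinal.iSup_lt_ord ?_ hhlt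
        rw [Cardinal.mk_nat, omega1, Cardinal.isRegular_aleph_one.cof_eq]
        exact Cardinal.aleph0_lt_aleph_one
      have hlamlim : Order.IsSuccLimit lam := by
        rw [Ordinal.isSuccLimit_iff, Order.isSuccPrelimit_iff_succ_lt]; constructor
        · intro h0
          have : h 0 < lam := lt_of_lt_of_le (hhmono 0) (hle 1)
          rw [h0] at this
          exact absurd this (zero_le (a := _)).not_gt
        · intro β hβ
          obtain ⟨n, hn⟩ := (hlt_iff β).1 hβ
          have : Order.succ β ≤ h n := Order.succ_le_of_lt hn
          exact lt_of_le_of_lt (this.trans (hhmono n).le) ((hhmono (n+1)).trans_le (hle (n+2)))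
      have hglam : g lam = lam := by
        refine le_antisymm ?_ (hid lam hlamω)
        refine le_of_forall_lt fun γ hγ => ?_
        obtain ⟨β, hβlam, hγβ⟩ := (hchar lam hlamω hlamlim γ).1 hγ
        obtain ⟨n, hn⟩ := (hlt_iff β).1 hβlam
        have : g β < g (h n) := hmono β (h n) hn (hhlt n)
        have h2 : g (h n) < h (n + 1) := by
          rw [hhsucc, Ordinal.add_one_eq_succ]
          exact Order.lt_succ _
        exact hγβ.trans (this.trans (h2.trans_le (hle (n+1))))
      refine ⟨lam, ⟨hlamω, hglam⟩, ?_⟩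
      have : α < h 0 := by
        rw [show h 0 = α + 1 from rfl, Ordinal.add_one_eq_succ]
        exact Order.lt_succ α
      exact this.trans_le (hle 0)
    · -- closed
      intro α hα hα0 hcof
      have hlim : Order.IsSuccLimit α := by
        rw [Ordinal.isSuccLimit_iff, Order.isSuccPrelimit_iff_succ_lt]; constructor
        · exact hα0
        · intro β hβ
          obtain ⟨γ, _, hβγ, hγα⟩ := hcof β hβ
          exact lt_of_le_of_lt (Order.succ_le_of_lt hβγ) hγα
      have hgα : g α = α := by
        refine le_antisymm ?_ (hid α hα)
        refine le_of_forall_lt fun γ hγ => ?_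
        obtain ⟨β, hβα, hγβ⟩ := (hchar α hα hlim γ).1 hγ
        obtain ⟨ρ, hρE, hβρ, hρα⟩ := hcof β hβα
        have : g β < g ρ := hmono β ρ hβρ (hρE.1)
        rw [hρE.2] at this
        exact hγβ.trans (this.trans hρα)
      exact ⟨hα, hgα⟩
  obtain ⟨α, hαA, hαE⟩ := hA E hEclub
  exact ⟨F α, hFD α hαE.1, by show g α ∈ A; rw [hαE.2]; exact hαA⟩

end Aux

/-- every spanning set `S ⊆ [κ]^ω` is projective stationary. -/
theorem spanning_implies_projectiveStationary (κ : Cardinal) (hκ : Cardinal.aleph0 < κ)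
    (S : Set (Set Ordinal.{0})) (hS : S ⊆ countPow (Set.Iio κ.ord))
    (hspan : IsSpanning κ S) :
    ProjStationary (Set.Iio κ.ord) S := by
  intro A _hA hstat C hC
  obtain ⟨D, hD, hext⟩ := hspan κ le_rfl C hC
  have hX : Set.Iio omega1 ⊆ Set.Iio κ.ord := by
    have hord : omega1 ≤ κ.ord := by
      rw [omega1]
      apply Cardinal.ord_le_ord.2
      rw [← Cardinal.succ_aleph0]
      exact Order.succ_le_of_lt hκ
    exact Set.Iio_subset_Iio hord
  obtain ⟨x, hxD, hxA⟩ := exists_mem_club_delta_mem hD hX hstat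
  obtain ⟨y, hyC, _hxy, hdelta, hyS⟩ := hext x hxD
  have hysub : y ⊆ Set.Iio κ.ord := (hC.1 hyC).1
  have hyeq : y ∩ Set.Iio κ.ord = y := Set.inter_eq_left.2 hysub
  rw [hyeq] at hyS
  exact ⟨y, ⟨hyS, hdelta ▸ hxA⟩, hyC⟩
end
end

section
/- Let κ₁ < κ₂ be uncountable cardinals with κ₁ > ω₁. If S ⊆ [κ₁]^ω is reflective, then its lifting Ŝ = {x ∈ [κ₂]^ω : x∩κ₁ ∈ S} is a reflective subset of [κ₂]^ω. -/
open Set Cardinal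

noncomputable section

namespace LiftRefl

lemma omega1_pos : (0:Ordinal.{0}) < omega1 := by
  rw [omega1, Cardinal.lt_ord]; simpa using Cardinal.aleph_pos 1

lemma omega1_isLimit : Order.IsSuccLimit omega1 :=
  Cardinal.isSuccLimit_ord (Cardinal.aleph0_le_aleph 1)

lemma countable_Iio {δ : Ordinal.{0}} (h : δ < omega1) : (Set.Iio δ).Countable := by
  rw [Cardinal.countable_iff_lt_aleph_one, Ordinal.mk_Iio_ordinal]
  have h1 : δ.card < Cardinal.aleph 1 := Cardinal.lt_ord.1 h
  have := Cardinal.lift_lt.{0,1}.mpr h1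
  simpa using this

lemma sSup_lt_omega1 {s : Set Ordinal.{0}} (hs : s.Countable)
    (h : ∀ ξ ∈ s, ξ < omega1) : sSup s < omega1 := by
  rcases s.eq_empty_or_nonempty with rfl | hne
  · rw [csSup_empty]; exact omega1_pos
  · obtain ⟨f, rfl⟩ := hs.exists_eq_range hne
    rw [← iSup]
    refine Ordinal.iSup_lt_ord ?_ (fun i => h _ (Set.mem_range_self i))
    rw [show omega1.cof = Cardinal.aleph 1 from Cardinal.isRegular_aleph_one.cof_eq]
    exact (Cardinal.mk_le_aleph0).trans_lt Cardinal.aleph0_lt_aleph_one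

lemma small_of_ctble {s : Set Ordinal.{0}} (hs : s.Countable) : Small.{0} s := by
  haveI := hs.to_subtype
  infer_instance

lemma biUnion_Iio_eq {s : Set Ordinal.{0}} (hs : s.Countable) :
    ⋃ δ ∈ s, Set.Iio δ = Set.Iio (sSup s) := by
  haveI := small_of_ctble hs
  ext ξ
  simp only [Set.mem_iUnion, Set.mem_Iio, exists_prop]
  constructor
  · rintro ⟨δ, hδ, hξ⟩
    exact hξ.trans_le (le_csSup Ordinal.bddAbove_of_small hδ)
  · intro hξ
    by_contra hcon
    push_neg at hcon
    rcases s.eq_empty_or_nonempty with rfl | hne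
    · rw [csSup_empty] at hξ; exact absurd hξ (by simp)
    · exact absurd (csSup_le hne hcon) (not_le.mpr hξ)

lemma goodSet_sUnion {D : Set (Set Ordinal.{0})} (hD : D.Countable)
    (h : ∀ y ∈ D, GoodSet y) : GoodSet (⋃₀ D) := by
  classical
  choose! δf h1 h2 using h
  refine ⟨sSup (δf '' D), sSup_lt_omega1 (hD.image _) ?_, ?_⟩
  · rintro ξ ⟨y, hy, rfl⟩; exact h1 y hy
  · rw [← biUnion_Iio_eq (hD.image _)]
    ext ξ
    simp only [Set.mem_inter_iff, Set.mem_sUnion, Set.mem_iUnion, Set.mem_Iio, exists_prop,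
      Set.mem_image]
    constructor
    · rintro ⟨⟨y, hy, hξy⟩, hξ⟩
      refine ⟨δf y, ⟨y, hy, rfl⟩, ?_⟩
      have h3 := h2 y hy
      have : ξ ∈ y ∩ Set.Iio omega1 := ⟨hξy, hξ⟩
      rw [h3] at this; exact this
    · rintro ⟨δ, ⟨y, hy, rfl⟩, hξ⟩
      have h3 := h2 y hy
      have : ξ ∈ y ∩ Set.Iio omega1 := by rw [h3]; exact hξ
      exact ⟨⟨y, hy, this.1⟩, this.2⟩

lemma delta_congr {x x' : Set Ordinal.{0}}
    (h : x ∩ Set.Iio omega1 = x' ∩ Set.Iio omega1) : delta x = delta x' := by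
  unfold delta; rw [h]

lemma finite_subset_chain {D : Set (Set Ordinal.{0})} (hch : IsChain (· ⊆ ·) D)
    (hne : D.Nonempty) {a : Set Ordinal.{0}} (ha : a.Finite) (h : a ⊆ ⋃₀ D) :
    ∃ y ∈ D, a ⊆ y := by
  have hdir : DirectedOn (fun i j : Set Ordinal.{0} => i ⊆ j) D := hch.directedOn
  have h' : (↑ha.toFinset : Set Ordinal.{0}) ⊆ ⋃ y ∈ D, y := by
    rw [ha.coe_toFinset]; rwa [← Set.sUnion_eq_biUnion]
  obtain ⟨y, hy, hsub⟩ := DirectedOn.exists_mem_subset_of_finset_subset_biUnion hne hdir h'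
  rw [ha.coe_toFinset] at hsub
  exact ⟨y, hy, hsub⟩

lemma exists_le_image {q : ℕ → Ordinal.{0}} {a : Set Ordinal.{0}} (ha : a.Finite)
    (h : a ⊆ Set.range q) : ∃ n, a ⊆ q '' (Set.Iic n) := by
  have hdir : Directed (· ⊆ ·) (fun n => q '' (Set.Iic n)) := fun n m =>
    ⟨max n m, Set.image_mono (f := q) (Set.Iic_subset_Iic.2 (le_max_left n m)),
      Set.image_mono (f := q) (Set.Iic_subset_Iic.2 (le_max_right n m))⟩
  have h' : (↑ha.toFinset : Set Ordinal.{0}) ⊆ ⋃ n, q '' (Set.Iic n) := by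
    rw [ha.coe_toFinset]
    intro ξ hξ
    obtain ⟨k, rfl⟩ := h hξ
    exact Set.mem_iUnion.2 ⟨k, Set.mem_image_of_mem q (Set.mem_Iic.2 le_rfl)⟩
  obtain ⟨n, hn⟩ := hdir.exists_mem_subset_of_finset_subset_biUnion h'
  rw [ha.coe_toFinset] at hn
  exact ⟨n, hn⟩

/-- Bound for the part of `z` below `ω₁`. -/
def bnd (z : Set Ordinal.{0}) : Ordinal.{0} :=
  sSup ((fun ξ => ξ + 1) '' (z ∩ Set.Iio omega1))

/-- Extend `z` to a set whose intersection with `ω₁` is an initial segment. -/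
def goodE (z : Set Ordinal.{0}) : Set Ordinal.{0} := z ∪ Set.Iio (bnd z)

lemma bnd_lt {z : Set Ordinal.{0}} (hz : z.Countable) : bnd z < omega1 := by
  refine sSup_lt_omega1 ((hz.mono Set.inter_subset_left).image _) ?_
  rintro ξ ⟨η, ⟨_, hη⟩, rfl⟩
  have := omega1_isLimit.succ_lt hη
  rwa [← Ordinal.add_one_eq_succ] at this

lemma lt_bnd {z : Set Ordinal.{0}} (hz : z.Countable) {ξ : Ordinal.{0}}
    (h : ξ ∈ z ∩ Set.Iio omega1) : ξ < bnd z := by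
  haveI : Small.{0} ((fun ξ => ξ + 1) '' (z ∩ Set.Iio omega1) : Set Ordinal.{0}) :=
    small_of_ctble ((hz.mono Set.inter_subset_left).image (fun ξ => ξ + 1))
  have h1 : ξ + 1 ≤ bnd z :=
    le_csSup Ordinal.bddAbove_of_small (Set.mem_image_of_mem _ h)
  exact lt_of_lt_of_le (lt_add_one ξ) h1

lemma goodE_inter {z : Set Ordinal.{0}} (hz : z.Countable) :
    goodE z ∩ Set.Iio omega1 = Set.Iio (bnd z) := by
  ext ξ
  constructor
  · rintro ⟨h1 | h1, h2⟩
    · exact lt_bnd hz ⟨h1, h2⟩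
    · exact h1
  · intro hξ
    exact ⟨Or.inr hξ, lt_trans hξ (bnd_lt hz)⟩

lemma goodset_goodE {z : Set Ordinal.{0}} (hz : z.Countable) : GoodSet (goodE z) :=
  ⟨bnd z, bnd_lt hz, goodE_inter hz⟩

lemma goodE_mem {z : Set Ordinal.{0}} {X : Ordinal.{0}} (hz : z.Countable)
    (hsub : z ⊆ Set.Iio X) (hX : omega1 ≤ X) : goodE z ∈ countPow (Set.Iio X) := by
  refine ⟨Set.union_subset hsub ?_, hz.union (countable_Iio (bnd_lt hz)), goodset_goodE hz⟩
  intro ξ hξ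
  exact lt_of_lt_of_le (lt_trans hξ (bnd_lt hz)) hX

/-- Iterated Skolem hull operator of level `n` on finite sets. -/
def Fn (base : Set Ordinal.{0} → Set Ordinal.{0}) : ℕ → Set Ordinal.{0} → Set Ordinal.{0}
  | 0, a => base (goodE a)
  | n+1, a => base (goodE (a ∪ ⋃ b ∈ {b : Set Ordinal.{0} | b ⊆ a}, Fn base n b))

/-- The hull of a finite set. -/
def Fb (base : Set Ordinal.{0} → Set Ordinal.{0}) (a : Set Ordinal.{0}) : Set Ordinal.{0} :=
  Fn base a.ncard a

/-- Closure of a countable set: union of hulls of its finite subsets. -/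
def cl (base : Set Ordinal.{0} → Set Ordinal.{0}) (y : Set Ordinal.{0}) : Set Ordinal.{0} :=
  ⋃ a ∈ {a : Set Ordinal.{0} | a ⊆ y ∧ a.Finite}, Fb base a

section Hull

variable {base : Set Ordinal.{0} → Set Ordinal.{0}} {C : Set (Set Ordinal.{0})} {X : Ordinal.{0}}

lemma Fn_mem (hX : omega1 ≤ X) (hCsub : C ⊆ countPow (Set.Iio X))
    (hbase : ∀ z ∈ countPow (Set.Iio X), base z ∈ C ∧ z ⊆ base z) :
    ∀ n (a : Set Ordinal.{0}), a.Finite → a ⊆ Set.Iio X →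
      Fn base n a ∈ C ∧ a ⊆ Fn base n a := by
  intro n
  induction n with
  | zero =>
    intro a ha hsub
    obtain ⟨h2, h3⟩ := hbase _ (goodE_mem ha.countable hsub hX)
    exact ⟨h2, Set.Subset.trans Set.subset_union_left h3⟩
  | succ n ih =>
    intro a ha hsub
    set z := a ∪ ⋃ b ∈ {b : Set Ordinal.{0} | b ⊆ a}, Fn base n b with hzdef
    have hzc : z.Countable := by
      refine ha.countable.union (Set.Countable.biUnion ha.finite_subsets.countable ?_)
      intro b hb
      exact (hCsub (ih b (ha.subset hb) (Set.Subset.trans hb hsub)).1).2.1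
    have hzsub : z ⊆ Set.Iio X := by
      refine Set.union_subset hsub (Set.iUnion₂_subset fun b hb => ?_)
      exact (hCsub (ih b (ha.subset hb) (Set.Subset.trans hb hsub)).1).1
    obtain ⟨h2, h3⟩ := hbase _ (goodE_mem hzc hzsub hX)
    refine ⟨h2, ?_⟩
    exact (Set.subset_union_left.trans Set.subset_union_left).trans h3

lemma Fn_succ_mono (hX : omega1 ≤ X) (hCsub : C ⊆ countPow (Set.Iio X))
    (hbase : ∀ z ∈ countPow (Set.Iio X), base z ∈ C ∧ z ⊆ base z)
    {n : ℕ} {a a' : Set Ordinal.{0}} (h : a ⊆ a') (ha' : a'.Finite)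
    (hs' : a' ⊆ Set.Iio X) : Fn base n a ⊆ Fn base (n+1) a' := by
  set z := a' ∪ ⋃ b ∈ {b : Set Ordinal.{0} | b ⊆ a'}, Fn base n b with hzdef
  have hzc : z.Countable := by
    refine ha'.countable.union (Set.Countable.biUnion ha'.finite_subsets.countable ?_)
    intro b hb
    exact (hCsub (Fn_mem hX hCsub hbase n b (ha'.subset hb) (Set.Subset.trans hb hs')).1).2.1
  have hzsub : z ⊆ Set.Iio X := by
    refine Set.union_subset hs' (Set.iUnion₂_subset fun b hb => ?_)
    exact (hCsub (Fn_mem hX hCsub hbase n b (ha'.subset hb) (Set.Subset.trans hb hs')).1).1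
  obtain ⟨h2, h3⟩ := hbase _ (goodE_mem hzc hzsub hX)
  have h4 : Fn base n a ⊆ z :=
    Set.Subset.trans (Set.subset_biUnion_of_mem (u := fun b => Fn base n b)
      (show a ∈ {b : Set Ordinal.{0} | b ⊆ a'} from h))
      Set.subset_union_right
  exact (h4.trans Set.subset_union_left).trans h3

lemma Fn_le_mono (hX : omega1 ≤ X) (hCsub : C ⊆ countPow (Set.Iio X))
    (hbase : ∀ z ∈ countPow (Set.Iio X), base z ∈ C ∧ z ⊆ base z)
    {m m' : ℕ} (hmm : m ≤ m') {a : Set Ordinal.{0}} (ha : a.Finite)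
    (hs : a ⊆ Set.Iio X) : Fn base m a ⊆ Fn base m' a := by
  induction m', hmm using Nat.le_induction with
  | base => exact Set.Subset.rfl
  | succ k hk ihk =>
    exact ihk.trans (Fn_succ_mono hX hCsub hbase Set.Subset.rfl ha hs)

lemma Fb_mem (hX : omega1 ≤ X) (hCsub : C ⊆ countPow (Set.Iio X))
    (hbase : ∀ z ∈ countPow (Set.Iio X), base z ∈ C ∧ z ⊆ base z)
    {a : Set Ordinal.{0}} (ha : a.Finite) (hs : a ⊆ Set.Iio X) :
    Fb base a ∈ C ∧ a ⊆ Fb base a :=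
  Fn_mem hX hCsub hbase _ a ha hs

lemma Fb_mono (hX : omega1 ≤ X) (hCsub : C ⊆ countPow (Set.Iio X))
    (hbase : ∀ z ∈ countPow (Set.Iio X), base z ∈ C ∧ z ⊆ base z)
    {a a' : Set Ordinal.{0}} (h : a ⊆ a') (ha' : a'.Finite)
    (hs' : a' ⊆ Set.Iio X) : Fb base a ⊆ Fb base a' := by
  by_cases heq : a = a'
  · subst heq; exact Set.Subset.rfl
  · have hss : a ⊂ a' := ⟨h, fun hh => heq (Set.Subset.antisymm h hh)⟩
    have hlt : a.ncard < a'.ncard := Set.ncard_lt_ncard hss ha'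
    exact (Fn_succ_mono hX hCsub hbase h ha' hs').trans
      (Fn_le_mono hX hCsub hbase hlt ha' hs')

lemma subset_cl (hX : omega1 ≤ X) (hCsub : C ⊆ countPow (Set.Iio X))
    (hbase : ∀ z ∈ countPow (Set.Iio X), base z ∈ C ∧ z ⊆ base z)
    {y : Set Ordinal.{0}} (hy : y ⊆ Set.Iio X) : y ⊆ cl base y := by
  intro ξ hξ
  have h1 : ({ξ} : Set Ordinal.{0}) ∈ {a : Set Ordinal.{0} | a ⊆ y ∧ a.Finite} :=
    ⟨Set.singleton_subset_iff.2 hξ, Set.finite_singleton ξ⟩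
  have h2 := (Fb_mem hX hCsub hbase (Set.finite_singleton ξ)
    (Set.singleton_subset_iff.2 (hy hξ))).2
  exact Set.mem_biUnion h1 (h2 rfl)

lemma cl_mono {y y' : Set Ordinal.{0}} (h : y ⊆ y') : cl base y ⊆ cl base y' := by
  refine Set.iUnion₂_subset fun a ha => ?_
  exact Set.subset_biUnion_of_mem (u := fun a => Fb base a) ⟨ha.1.trans h, ha.2⟩

lemma cl_mem (hX : omega1 ≤ X) (hCsub : C ⊆ countPow (Set.Iio X))
    (hbase : ∀ z ∈ countPow (Set.Iio X), base z ∈ C ∧ z ⊆ base z)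
    (hCcl : ∀ D : Set (Set Ordinal.{0}), D ⊆ C → D.Countable → D.Nonempty →
      IsChain (· ⊆ ·) D → ⋃₀ D ∈ C)
    {y : Set Ordinal.{0}} (hyc : y.Countable) (hy : y ⊆ Set.Iio X) :
    cl base y ∈ C := by
  rcases y.eq_empty_or_nonempty with rfl | hne
  · have hcl : cl base ∅ = Fb base ∅ := by
      apply Set.Subset.antisymm
      · refine Set.iUnion₂_subset fun a ha => ?_
        rw [Set.subset_empty_iff.mp ha.1]
      · exact Set.subset_biUnion_of_mem (u := fun a => Fb base a)
          ⟨Set.Subset.rfl, Set.finite_empty⟩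
    rw [hcl]
    exact (Fb_mem hX hCsub hbase Set.finite_empty (Set.empty_subset _)).1
  · obtain ⟨q, hq⟩ := hyc.exists_eq_range hne
    have haux : ∀ n : ℕ, (q '' Set.Iic n).Finite ∧ q '' Set.Iic n ⊆ Set.Iio X := by
      intro n
      refine ⟨(Set.finite_Iic n).image q, ?_⟩
      refine Set.Subset.trans ?_ hy
      rw [hq]; exact Set.image_subset_range q _
    have hqy : ∀ n : ℕ, q '' Set.Iic n ⊆ y := by
      intro n; rw [hq]; exact Set.image_subset_range q _
    set D : Set (Set Ordinal.{0}) := Set.range (fun n => Fb base (q '' Set.Iic n)) with hD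
    have hDC : D ⊆ C := by
      rintro _ ⟨n, rfl⟩
      exact (Fb_mem hX hCsub hbase (haux n).1 (haux n).2).1
    have hDch : IsChain (· ⊆ ·) D := by
      rintro _ ⟨n, rfl⟩ _ ⟨m, rfl⟩ _
      rcases le_total n m with hnm | hnm
      · exact Or.inl (Fb_mono hX hCsub hbase
          (Set.image_mono (f := q) (Set.Iic_subset_Iic.2 hnm)) (haux m).1 (haux m).2)
      · exact Or.inr (Fb_mono hX hCsub hbase
          (Set.image_mono (f := q) (Set.Iic_subset_Iic.2 hnm)) (haux n).1 (haux n).2)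
    have hUD : ⋃₀ D = cl base y := by
      apply Set.Subset.antisymm
      · refine Set.sUnion_subset ?_
        rintro _ ⟨n, rfl⟩
        exact Set.subset_biUnion_of_mem (u := fun a => Fb base a) ⟨hqy n, (haux n).1⟩
      · refine Set.iUnion₂_subset fun a ha => ?_
        obtain ⟨n, hn⟩ := exists_le_image ha.2 (ha.1.trans (by rw [hq]))
        refine Set.Subset.trans (Fb_mono hX hCsub hbase hn (haux n).1 (haux n).2) ?_
        exact Set.subset_sUnion_of_mem ⟨n, rfl⟩
    rw [← hUD]
    exact hCcl D hDC (Set.countable_range _) ⟨_, Set.mem_range_self 0⟩ hDch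

lemma cl_sUnion_chain {D : Set (Set Ordinal.{0})} (hch : IsChain (· ⊆ ·) D)
    (hne : D.Nonempty) : cl base (⋃₀ D) = ⋃ y ∈ D, cl base y := by
  apply Set.Subset.antisymm
  · refine Set.iUnion₂_subset fun a ha => ?_
    obtain ⟨y, hyD, hay⟩ := finite_subset_chain hch hne ha.2 ha.1
    refine Set.Subset.trans ?_ (Set.subset_biUnion_of_mem (u := fun y => cl base y) hyD)
    exact Set.subset_biUnion_of_mem (u := fun a => Fb base a) ⟨hay, ha.2⟩
  · exact Set.iUnion₂_subset fun y hy => cl_mono (Set.subset_sUnion_of_mem hy)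

end Hull

end LiftRefl


/-- the lifting of a reflective set `S ⊆ [κ₁]^ω` to `[κ₂]^ω` is reflective. -/
theorem lifting_reflective (κ₁ κ₂ : Cardinal) (h₁ : Cardinal.aleph 1 < κ₁) (h₁₂ : κ₁ < κ₂)
    (S : Set (Set Ordinal.{0})) (hS : S ⊆ countPow (Set.Iio κ₁.ord))
    (hrefl : IsReflective (Set.Iio κ₁.ord) S) :
    IsReflective (Set.Iio κ₂.ord)
      {x ∈ countPow (Set.Iio κ₂.ord) | x ∩ Set.Iio κ₁.ord ∈ S} := by
  classical
  intro C hC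
  obtain ⟨hCsub, hCcof, hCcl⟩ := hC
  have hX1 : omega1 ≤ κ₁.ord := by
    rw [omega1]; exact Cardinal.ord_le_ord.mpr h₁.le
  have h12o : κ₁.ord ≤ κ₂.ord := Cardinal.ord_le_ord.mpr h₁₂.le
  have hX2 : omega1 ≤ κ₂.ord := hX1.trans h12o
  have hIio12 : Set.Iio κ₁.ord ⊆ Set.Iio κ₂.ord := fun ξ hξ => lt_of_lt_of_le hξ h12o
  -- choice of cofinal extensions
  have hcof' : ∀ z : Set Ordinal.{0}, ∃ w, z ∈ countPow (Set.Iio κ₂.ord) → w ∈ C ∧ z ⊆ w := by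
    intro z
    by_cases hz : z ∈ countPow (Set.Iio κ₂.ord)
    · obtain ⟨w, hw, hzw⟩ := hCcof z hz
      exact ⟨w, fun _ => ⟨hw, hzw⟩⟩
    · exact ⟨∅, fun h => absurd h hz⟩
  choose base hbase0 using hcof'
  have hbase : ∀ z ∈ countPow (Set.Iio κ₂.ord), base z ∈ C ∧ z ⊆ base z :=
    fun z hz => hbase0 z hz
  have hclC : ∀ y : Set Ordinal.{0}, y.Countable → y ⊆ Set.Iio κ₁.ord →
      LiftRefl.cl base y ∈ C := fun y hyc hy =>
    LiftRefl.cl_mem hX2 hCsub hbase hCcl hyc (hy.trans hIio12)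
  have hsubcl : ∀ y : Set Ordinal.{0}, y ⊆ Set.Iio κ₁.ord → y ⊆ LiftRefl.cl base y :=
    fun y hy => LiftRefl.subset_cl hX2 hCsub hbase (hy.trans hIio12)
  -- the projected club
  set C' : Set (Set Ordinal.{0}) :=
    {y | y ∈ countPow (Set.Iio κ₁.ord) ∧ LiftRefl.cl base y ∩ Set.Iio κ₁.ord = y} with hC'def
  have hC'club : IsClubIn (Set.Iio κ₁.ord) C' := by
    refine ⟨fun y hy => hy.1, ?_, ?_⟩
    · -- cofinality
      intro y₀ hy₀
      set x : ℕ → Set Ordinal.{0} :=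
        fun n => Nat.rec y₀ (fun _ z => LiftRefl.goodE (LiftRefl.cl base z ∩ Set.Iio κ₁.ord)) n
        with hxdef
      have hxs : ∀ n, x (n+1) = LiftRefl.goodE (LiftRefl.cl base (x n) ∩ Set.Iio κ₁.ord) :=
        fun n => rfl
      have hbasic : ∀ n, (x n).Countable ∧ x n ⊆ Set.Iio κ₁.ord := by
        intro n; induction n with
        | zero => exact ⟨hy₀.2.1, hy₀.1⟩
        | succ n ih =>
          have hzc : (LiftRefl.cl base (x n) ∩ Set.Iio κ₁.ord).Countable :=
            ((hCsub (hclC (x n) ih.1 ih.2)).2.1).mono Set.inter_subset_left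
          constructor
          · rw [hxs]
            exact hzc.union (LiftRefl.countable_Iio (LiftRefl.bnd_lt hzc))
          · rw [hxs]
            refine Set.union_subset Set.inter_subset_right ?_
            intro ξ hξ
            exact lt_of_lt_of_le (lt_trans hξ (LiftRefl.bnd_lt hzc)) hX1
      have hgood : ∀ n, GoodSet (x n) := by
        intro n; cases n with
        | zero => exact hy₀.2.2
        | succ n =>
          have hzc : (LiftRefl.cl base (x n) ∩ Set.Iio κ₁.ord).Countable :=
            ((hCsub (hclC (x n) (hbasic n).1 (hbasic n).2)).2.1).mono Set.inter_subset_left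
          rw [hxs]
          exact LiftRefl.goodset_goodE hzc
      have hmono1 : ∀ n, x n ⊆ x (n+1) := by
        intro n
        rw [hxs]
        refine Set.Subset.trans ?_ Set.subset_union_left
        exact Set.subset_inter (hsubcl (x n) (hbasic n).2) (hbasic n).2
      have hmono : ∀ m n, m ≤ n → x m ⊆ x n := by
        intro m n h
        induction n, h using Nat.le_induction with
        | base => exact Set.Subset.rfl
        | succ k hk ihk => exact ihk.trans (hmono1 k)
      set y' : Set Ordinal.{0} := ⋃ n, x n with hy'def
      have hy'r : y' = ⋃₀ (Set.range x) := (Set.sUnion_range x).symm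
      have hy'sub : y' ⊆ Set.Iio κ₁.ord := Set.iUnion_subset fun n => (hbasic n).2
      have hy'c : y'.Countable := Set.countable_iUnion fun n => (hbasic n).1
      have hy'good : GoodSet y' := by
        rw [hy'r]
        exact LiftRefl.goodSet_sUnion (Set.countable_range x)
          (by rintro _ ⟨n, rfl⟩; exact hgood n)
      have hchainx : IsChain (· ⊆ ·) (Set.range x) := by
        rintro _ ⟨n, rfl⟩ _ ⟨m, rfl⟩ _
        rcases le_total n m with h | h
        · exact Or.inl (hmono n m h)
        · exact Or.inr (hmono m n h)
      have hcly' : LiftRefl.cl base y' = ⋃ n, LiftRefl.cl base (x n) := by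
        rw [hy'r, LiftRefl.cl_sUnion_chain hchainx ⟨_, Set.mem_range_self 0⟩,
          Set.biUnion_range]
      refine ⟨y', ⟨⟨hy'sub, hy'c, hy'good⟩, ?_⟩, Set.subset_iUnion x 0⟩
      apply Set.Subset.antisymm
      · rw [hcly', Set.iUnion_inter]
        refine Set.iUnion_subset fun n => ?_
        refine Set.Subset.trans ?_ (Set.subset_iUnion x (n+1))
        rw [hxs n]
        exact Set.subset_union_left
      · exact Set.subset_inter (hsubcl y' hy'sub) hy'sub
    · -- closure under chains
      intro D hDC' hDc hDne hDch
      have h1 : ∀ y ∈ D, y ∈ countPow (Set.Iio κ₁.ord) := fun y hy => (hDC' hy).1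
      refine ⟨⟨Set.sUnion_subset fun y hy => (h1 y hy).1,
        Set.Countable.sUnion hDc (fun y hy => (h1 y hy).2.1),
        LiftRefl.goodSet_sUnion hDc (fun y hy => (h1 y hy).2.2)⟩, ?_⟩
      rw [LiftRefl.cl_sUnion_chain hDch hDne]
      have heq : (⋃ y ∈ D, LiftRefl.cl base y) ∩ Set.Iio κ₁.ord
          = ⋃ y ∈ D, (LiftRefl.cl base y ∩ Set.Iio κ₁.ord) := by
        ext ξ
        simp only [Set.mem_inter_iff, Set.mem_iUnion, exists_prop]
        tauto
      rw [heq]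
      rw [Set.sUnion_eq_biUnion]
      exact Set.iUnion₂_congr fun y hy => (hDC' hy).2
  -- reflect downstairs and lift the chain
  obtain ⟨g, hgch, hgmem⟩ := hrefl C' hC'club
  obtain ⟨hg1, hg2, hg3⟩ := hgch
  have hdeq : ∀ γ, γ < omega1 → delta (LiftRefl.cl base (g γ)) = delta (g γ) := by
    intro γ hγ
    apply LiftRefl.delta_congr
    have hint : LiftRefl.cl base (g γ) ∩ Set.Iio κ₁.ord = g γ := ((hgmem γ hγ).2).2
    ext ξ
    simp only [Set.mem_inter_iff, Set.mem_Iio]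
    constructor
    · rintro ⟨hm, hlt⟩
      have : ξ ∈ LiftRefl.cl base (g γ) ∩ Set.Iio κ₁.ord := ⟨hm, lt_of_lt_of_le hlt hX1⟩
      rw [hint] at this
      exact ⟨this, hlt⟩
    · rintro ⟨hm, hlt⟩
      have : ξ ∈ LiftRefl.cl base (g γ) ∩ Set.Iio κ₁.ord := by rw [hint]; exact hm
      exact ⟨this.1, hlt⟩
  refine ⟨fun α => LiftRefl.cl base (g α), ⟨?_, ?_, ?_⟩, ?_⟩
  · intro α β hαβ hβ
    exact LiftRefl.cl_mono (hg1 α β hαβ hβ)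
  · intro β hβ hlim
    have h0 : (0:Ordinal.{0}) ∈ Set.Iio β := hlim.pos
    have hch : IsChain (· ⊆ ·) (g '' Set.Iio β) := by
      rintro _ ⟨α, hα, rfl⟩ _ ⟨α', hα', rfl⟩ _
      rcases lt_trichotomy α α' with h | h | h
      · exact Or.inl (hg1 α α' h (lt_trans hα' hβ))
      · rw [h]; exact Or.inl Set.Subset.rfl
      · exact Or.inr (hg1 α' α h (lt_trans hα hβ))
    show LiftRefl.cl base (g β) = ⋃ α ∈ Set.Iio β, LiftRefl.cl base (g α)
    rw [hg2 β hβ hlim]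
    have h2 : (⋃ α ∈ Set.Iio β, g α) = ⋃₀ (g '' Set.Iio β) := (Set.sUnion_image g _).symm
    rw [h2, LiftRefl.cl_sUnion_chain hch ⟨g 0, Set.mem_image_of_mem g h0⟩,
      Set.biUnion_image]
  · intro α β hαβ hβ
    rw [hdeq α (lt_trans hαβ hβ), hdeq β hβ]
    exact hg3 α β hαβ hβ
  · intro α hα
    obtain ⟨hgS, hgC'⟩ := hgmem α hα
    have hcp : g α ∈ countPow (Set.Iio κ₁.ord) := hgC'.1
    have hmemC : LiftRefl.cl base (g α) ∈ C := hclC _ hcp.2.1 hcp.1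
    exact ⟨⟨hCsub hmemC, by rw [hgC'.2]; exact hgS⟩, hmemC⟩
end
end

section
/- For every uncountable cardinal κ, a set S ⊆ [κ]^ω is full if and only if there exists a maximal antichain W of stationary subsets of ω₁ such that for every A ∈ W there exists a club C_A ⊆ [κ]^ω with {x ∈ C_A : δ_x ∈ A} ⊆ S. -/
open Set Cardinal

noncomputable section

/-- `S ⊆ [κ]^ω` is full iff there is a maximal antichain `W` of stationary
subsets of `ω₁` such that for every `A ∈ W` there is a club `C_A ⊆ [κ]^ω` with
`{x ∈ C_A : δ_x ∈ A} ⊆ S`. -/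
theorem full_iff_maximalAntichain (κ : Cardinal) (hκ : Cardinal.aleph0 < κ)
    (S : Set (Set Ordinal.{0})) (hS : S ⊆ countPow (Set.Iio κ.ord)) :
    IsFull (Set.Iio κ.ord) S ↔
      ∃ W : Set (Set Ordinal.{0}),
        (∀ A ∈ W, A ⊆ Set.Iio omega1 ∧ IsStatOmega1 A) ∧
        (∀ A ∈ W, ∀ A' ∈ W, A ≠ A' → ¬ IsStatOmega1 (A ∩ A')) ∧
        (∀ A, A ⊆ Set.Iio omega1 → IsStatOmega1 A → ∃ B ∈ W, IsStatOmega1 (A ∩ B)) ∧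
        (∀ A ∈ W, ∃ C, IsClubIn (Set.Iio κ.ord) C ∧ {x ∈ C | delta x ∈ A} ⊆ S) := by

  have statMono : ∀ T T' : Set Ordinal.{0}, T ⊆ T' → IsStatOmega1 T → IsStatOmega1 T' := by
    intro T T' hsub hT C hC
    obtain ⟨x, hx1, hx2⟩ := hT C hC
    exact ⟨x, hsub hx1, hx2⟩
  constructor
  · intro hFull
    set P : Set (Set (Set Ordinal.{0})) :=
      {W | (∀ A ∈ W, A ⊆ Set.Iio omega1 ∧ IsStatOmega1 A) ∧
           (∀ A ∈ W, ∀ A' ∈ W, A ≠ A' → ¬ IsStatOmega1 (A ∩ A')) ∧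
           (∀ A ∈ W, ∃ C, IsClubIn (Set.Iio κ.ord) C ∧ {x ∈ C | delta x ∈ A} ⊆ S)} with hP
    have hchain : ∀ c ⊆ P, IsChain (· ⊆ ·) c → ∃ ub ∈ P, ∀ s ∈ c, s ⊆ ub := by
      intro c hc hch
      refine ⟨⋃₀ c, ⟨?_, ?_, ?_⟩, fun s hs => Set.subset_sUnion_of_mem hs⟩
      · rintro A ⟨W, hW, hA⟩; exact (hc hW).1 A hA
      · rintro A ⟨W, hW, hA⟩ A' ⟨W', hW', hA'⟩ hne
        rcases eq_or_ne W W' with rfl | hWne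
        · exact (hc hW).2.1 A hA A' hA' hne
        · rcases hch hW hW' hWne with h | h
          · exact (hc hW').2.1 A (h hA) A' hA' hne
          · exact (hc hW).2.1 A hA A' (h hA') hne
      · rintro A ⟨W, hW, hA⟩; exact (hc hW).2.2 A hA
    obtain ⟨W, hWmax⟩ := zorn_subset P hchain
    have hWP := hWmax.prop
    refine ⟨W, hWP.1, hWP.2.1, ?_, hWP.2.2⟩
    intro A hA hAstat
    obtain ⟨B, hBA, hBstat, C, hC, hCS⟩ := hFull A hA hAstat
    by_cases hBW : B ∈ W
    · refine ⟨B, hBW, ?_⟩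
      rwa [Set.inter_eq_self_of_subset_right hBA]
    · by_contra hno
      push_neg at hno
      have hBno : ∀ A' ∈ W, ¬ IsStatOmega1 (B ∩ A') := by
        intro A' hA' hst
        exact hno A' hA' (statMono _ _ (Set.inter_subset_inter_left A' hBA) hst)
      have hins : insert B W ∈ P := by
        refine ⟨?_, ?_, ?_⟩
        · rintro A' (rfl | hA')
          · exact ⟨hBA.trans hA, hBstat⟩
          · exact hWP.1 A' hA'
        · rintro A₁ (rfl | h₁) A₂ (rfl | h₂) hne
          · exact absurd rfl hne
          · exact hBno A₂ h₂
          · rw [Set.inter_comm]; exact hBno A₁ h₁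
          · exact hWP.2.1 A₁ h₁ A₂ h₂ hne
        · rintro A' (rfl | hA')
          · exact ⟨C, hC, hCS⟩
          · exact hWP.2.2 A' hA'
      have := hWmax.eq_of_subset hins (Set.subset_insert B W)
      exact hBW (this ▸ Set.mem_insert B W)
  · rintro ⟨W, hW1, _, hW3, hW4⟩ A hA hAstat
    obtain ⟨B', hB'W, hstat⟩ := hW3 A hA hAstat
    obtain ⟨C, hC, hCS⟩ := hW4 B' hB'W
    refine ⟨A ∩ B', Set.inter_subset_left, hstat, C, hC, ?_⟩
    rintro x ⟨hxC, hxd⟩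
    exact hCS ⟨hxC, hxd.2⟩
end
end

section
/- There exists a local club S ⊆ [ω₂]^ω of cardinality ℵ₂: for each ordinal η with ω₁ ≤ η < ω₂ there is a club C_η ⊆ [η]^ω of cardinality ℵ₁, and the union S = ⋃{C_η : ω₁ ≤ η < ω₂} is a local club in [ω₂]^ω of cardinality ℵ₂. -/
open Set Cardinal

noncomputable section

lemma omega1_pos : 0 < omega1 := by
  rw [omega1, Cardinal.lt_ord]; simpa using (aleph0_le_aleph 1).trans_lt' aleph0_pos

lemma two_eq_succ_one : (2 : Ordinal) = Order.succ 1 := by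
  rw [Ordinal.succ_one]

lemma isRegular_a2 : Cardinal.IsRegular (Cardinal.aleph 2) := by
  rw [two_eq_succ_one]; exact Cardinal.isRegular_aleph_succ 1

lemma omega1_lt_omega2 : omega1 < (Cardinal.aleph 2).ord := by
  rw [omega1]; exact Cardinal.ord_lt_ord.mpr (aleph_lt_aleph.mpr one_lt_two)

lemma card_lt_of_lt_omega2 {η : Ordinal.{0}} (h : η < (Cardinal.aleph 2).ord) :
    η.card ≤ Cardinal.aleph 1 := by
  have := Cardinal.lt_ord.mp h
  rwa [two_eq_succ_one, Cardinal.aleph_succ, Order.lt_succ_iff] at this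

lemma card_of_mem_Ico {η : Ordinal.{0}} (h1 : omega1 ≤ η) (h2 : η < (Cardinal.aleph 2).ord) :
    η.card = Cardinal.aleph 1 := by
  refine le_antisymm (card_lt_of_lt_omega2 h2) ?_
  have := Ordinal.card_le_card h1
  rwa [omega1, Cardinal.card_ord] at this

lemma mk_Iio_eq {η : Ordinal.{0}} (h1 : omega1 ≤ η) (h2 : η < (Cardinal.aleph 2).ord) :
    Cardinal.mk (Set.Iio η) = Cardinal.aleph 1 := by
  rw [Ordinal.mk_Iio_ordinal, card_of_mem_Ico h1 h2, Cardinal.lift_aleph, Ordinal.lift_one]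

lemma succ_lt_omega1 {β : Ordinal.{0}} (h : β < omega1) : β + 1 < omega1 := by
  simpa using omega1_isLimit.succ_lt h

-- countable sup bound below omega1

lemma exists_bound_lt_omega1 {s : Set Ordinal.{0}} (hc : s.Countable)
    (hb : ∀ o ∈ s, o < omega1) : ∃ δ < omega1, ∀ o ∈ s, o ≤ δ := by
  rcases s.eq_empty_or_nonempty with rfl | hne
  · exact ⟨0, omega1_pos, by simp⟩
  obtain ⟨f, rfl⟩ := hc.exists_eq_range hne
  refine ⟨⨆ n, f n, ?_, ?_⟩
  · refine Cardinal.iSup_lt_ord_of_isRegular Cardinal.isRegular_aleph_one ?_ ?_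
    · simpa using Cardinal.aleph0_lt_aleph_one
    · exact fun n => hb _ ⟨n, rfl⟩
  · rintro o ⟨n, rfl⟩
    exact le_ciSup (Ordinal.bddAbove_range f) n

-- bound below omega2 for sets of size ≤ ℵ₁

lemma exists_bound_lt_omega2 {X : Set Ordinal.{0}} (h : Cardinal.mk X ≤ Cardinal.aleph 1)
    (hb : ∀ ξ ∈ X, ξ < (Cardinal.aleph 2).ord) :
    ∃ η < (Cardinal.aleph 2).ord, ∀ ξ ∈ X, ξ ≤ η := by
  rcases X.eq_empty_or_nonempty with rfl | hne
  · exact ⟨omega1, omega1_lt_omega2, by simp⟩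
  have hmk : Cardinal.lift.{0} (Cardinal.mk X) ≤
      Cardinal.lift.{1} (Cardinal.mk omega1.ToType) := by
    rw [Cardinal.mk_toType, omega1, Cardinal.card_ord, Cardinal.lift_aleph, Ordinal.lift_one]
    simpa using h
  obtain ⟨e⟩ := Cardinal.lift_mk_le'.mp hmk
  have hXne : Nonempty X := hne.to_subtype
  have hsurj : Function.Surjective (Function.invFun (⇑e)) :=
    Function.invFun_surjective e.injective
  set g : omega1.ToType → X := Function.invFun (⇑e) with hg
  set f : omega1.ToType → Ordinal.{0} := fun i => (g i : Ordinal) with hf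
  refine ⟨⨆ i, f i, ?_, ?_⟩
  · refine Cardinal.iSup_lt_ord_of_isRegular isRegular_a2 ?_ (fun i => hb _ (g i).2)
    rw [Cardinal.mk_toType, omega1, Cardinal.card_ord]
    exact aleph_lt_aleph.mpr one_lt_two
  · intro ξ hξ
    obtain ⟨i, hi⟩ := hsurj ⟨ξ, hξ⟩
    have : f i = ξ := by rw [hf]; simp only [← hg, hi]
    rw [← this]
    exact le_ciSup (Ordinal.bddAbove_range f) i

def xset (g : Ordinal.{0} → Ordinal.{0}) (δ : Ordinal.{0}) : Set Ordinal.{0} :=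
  Set.Iio δ ∪ {ξ | omega1 ≤ ξ ∧ ∃ β < δ, g β = ξ}

def Cfam (g : Ordinal.{0} → Ordinal.{0}) : Set (Set Ordinal.{0}) :=
  xset g '' Set.Iio omega1

lemma xset_inter {g : Ordinal.{0} → Ordinal.{0}} {δ : Ordinal.{0}} (hδ : δ < omega1) :
    xset g δ ∩ Set.Iio omega1 = Set.Iio δ := by
  ext ξ
  constructor
  · rintro ⟨h1 | ⟨h2, _⟩, hξ⟩
    · exact h1
    · exact absurd hξ (not_lt.mpr h2)
  · intro h
    exact ⟨Or.inl h, h.trans hδ⟩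

lemma xset_injOn {g : Ordinal.{0} → Ordinal.{0}} : Set.InjOn (xset g) (Set.Iio omega1) := by
  intro a ha b hb hab
  have : Set.Iio a = Set.Iio b := by rw [← xset_inter (g := g) ha, ← xset_inter (g := g) hb, hab]
  exact Set.Iio_injective this

lemma xset_mono {g : Ordinal.{0} → Ordinal.{0}} {δ δ' : Ordinal.{0}} (h : δ ≤ δ') :
    xset g δ ⊆ xset g δ' := by
  rintro ξ (h1 | ⟨h2, β, hβ, rfl⟩)
  · exact Or.inl (h1.trans_le h)
  · exact Or.inr ⟨h2, β, hβ.trans_le h, rfl⟩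

lemma countable_Iio_ord {δ : Ordinal.{0}} (hδ : δ < omega1) : (Set.Iio δ).Countable := by
  rw [Cardinal.countable_iff_lt_aleph_one, Ordinal.mk_Iio_ordinal]
  have h : Cardinal.lift.{1} δ.card < Cardinal.lift.{1} (Cardinal.aleph 1) :=
    Cardinal.lift_lt.mpr (Cardinal.lt_ord.mp hδ)
  simpa [Cardinal.lift_aleph] using h

lemma xset_countable {g : Ordinal.{0} → Ordinal.{0}} {δ : Ordinal.{0}} (hδ : δ < omega1) :
    (xset g δ).Countable := by
  apply Set.Countable.union (countable_Iio_ord hδ)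
  have hsub : {ξ | omega1 ≤ ξ ∧ ∃ β < δ, g β = ξ} ⊆ g '' (Set.Iio δ) := by
    rintro ξ ⟨_, β, hβ, rfl⟩
    exact ⟨β, hβ, rfl⟩
  exact Set.Countable.mono hsub ((countable_Iio_ord hδ).image g)

lemma xset_mem_countPow {g η : _} {δ : Ordinal.{0}} (hδ : δ < omega1) (hη : omega1 ≤ η)
    (hg1 : ∀ β < omega1, g β < η) : xset g δ ∈ countPow (Set.Iio η) := by
  refine ⟨?_, xset_countable hδ, δ, hδ, xset_inter hδ⟩
  rintro ξ (h1 | ⟨h2, β, hβ, rfl⟩)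
  · exact h1.trans_le (hδ.le.trans hη)
  · exact hg1 β (hβ.trans hδ)

lemma isClubIn_Cfam {g : Ordinal.{0} → Ordinal.{0}} {η : Ordinal.{0}} (hη : omega1 ≤ η)
    (hg1 : ∀ β < omega1, g β < η) (hg2 : ∀ ξ < η, ∃ β < omega1, g β = ξ) :
    IsClubIn (Set.Iio η) (Cfam g) := by
  refine ⟨?_, ?_, ?_⟩
  · rintro _ ⟨δ, hδ, rfl⟩
    exact xset_mem_countPow hδ hη hg1
  · -- cofinality
    rintro x ⟨hxsub, hxc, δ₀, hδ₀, hxint⟩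
    -- choose preimages for elements of x above omega1
    have hch : ∀ ξ : x, ∃ β, β < omega1 ∧ (omega1 ≤ (ξ : Ordinal) → g β = ξ) := by
      rintro ⟨ξ, hξ⟩
      by_cases h : omega1 ≤ ξ
      · obtain ⟨β, hβ, hgβ⟩ := hg2 ξ (hxsub hξ)
        exact ⟨β, hβ, fun _ => hgβ⟩
      · exact ⟨0, omega1_pos, fun h' => absurd h' h⟩
    choose b hb1 hb2 using hch
    set s : Set Ordinal.{0} := insert δ₀ ((fun ξ : x => b ξ + 1) '' Set.univ) with hs
    have hsc : s.Countable := by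
      apply Set.Countable.insert
      apply Set.Countable.image
      have : Countable x := hxc.to_subtype
      exact Set.countable_univ
    have hsb : ∀ o ∈ s, o < omega1 := by
      rintro o (rfl | ⟨ξ, -, rfl⟩)
      · exact hδ₀
      · exact succ_lt_omega1 (hb1 ξ)
    obtain ⟨δ, hδ, hδb⟩ := exists_bound_lt_omega1 hsc hsb
    refine ⟨xset g δ, ⟨δ, hδ, rfl⟩, ?_⟩
    intro ξ hξ
    by_cases h : omega1 ≤ ξ
    · refine Or.inr ⟨h, b ⟨ξ, hξ⟩, ?_, hb2 ⟨ξ, hξ⟩ h⟩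
      have : b ⟨ξ, hξ⟩ + 1 ∈ s := Or.inr ⟨⟨ξ, hξ⟩, trivial, rfl⟩
      exact lt_of_lt_of_le (Order.lt_succ _) (by simpa using hδb _ this)
    · have : ξ ∈ x ∩ Set.Iio omega1 := ⟨hξ, not_le.mp h⟩
      rw [hxint] at this
      exact Or.inl (this.trans_le (hδb δ₀ (Or.inl rfl)))
  · -- chain closure
    intro D hD hDc hDne _
    set Δ : Set Ordinal.{0} := {δ | δ < omega1 ∧ xset g δ ∈ D} with hΔ
    have hΔne : Δ.Nonempty := by
      obtain ⟨d, hd⟩ := hDne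
      obtain ⟨δ, hδ, rfl⟩ := hD hd
      exact ⟨δ, hδ, hd⟩
    have hΔc : Δ.Countable := by
      rw [← Set.countable_coe_iff]
      have : Countable D := hDc.to_subtype
      exact Function.Injective.countable (f := fun δ : Δ => (⟨xset g δ, δ.2.2⟩ : D))
        (fun a b hab => Subtype.ext (xset_injOn a.2.1 b.2.1 (by simpa using hab)))
    have hΔbdd : BddAbove Δ := ⟨omega1, fun δ hδ => hδ.1.le⟩
    obtain ⟨δ', hδ', hδ'b⟩ := exists_bound_lt_omega1 hΔc (fun o ho => ho.1)
    have hsup_lt : sSup Δ < omega1 := lt_of_le_of_lt (csSup_le hΔne hδ'b) hδ'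
    have hunion : ⋃₀ D = xset g (sSup Δ) := by
      apply Set.Subset.antisymm
      · rintro ξ ⟨d, hd, hξd⟩
        obtain ⟨δ, hδ, rfl⟩ := hD hd
        exact xset_mono (le_csSup hΔbdd ⟨hδ, hd⟩) hξd
      · rintro ξ (h1 | ⟨h2, β, hβ, rfl⟩)
        · obtain ⟨δ, hδΔ, hlt⟩ := (lt_csSup_iff hΔbdd hΔne).mp h1
          exact ⟨xset g δ, hδΔ.2, Or.inl hlt⟩
        · obtain ⟨δ, hδΔ, hlt⟩ := (lt_csSup_iff hΔbdd hΔne).mp hβ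
          exact ⟨xset g δ, hδΔ.2, Or.inr ⟨h2, β, hlt, rfl⟩⟩
    rw [hunion]
    exact ⟨sSup Δ, hsup_lt, rfl⟩

lemma mk_Cfam {g : Ordinal.{0} → Ordinal.{0}} : Cardinal.mk (Cfam g) = Cardinal.aleph 1 := by
  rw [Cfam, Cardinal.mk_image_eq_of_injOn _ _ xset_injOn, mk_Iio_eq le_rfl omega1_lt_omega2]

def Cstar : Set (Set Ordinal.{0}) :=
  (fun η => Set.Iio η) '' Set.Ico omega1 (Cardinal.aleph 2).ord

lemma omega2_isLimit : Order.IsSuccLimit ((Cardinal.aleph 2).ord) := Cardinal.isSuccLimit_ord (aleph0_le_aleph 2)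

lemma isClubAleph1_Cstar : IsClubAleph1 (Set.Iio (Cardinal.aleph 2).ord) Cstar := by
  refine ⟨?_, ?_, ?_⟩
  · rintro _ ⟨η, ⟨hη1, hη2⟩, rfl⟩
    exact ⟨fun ξ hξ => hξ.trans hη2, mk_Iio_eq hη1 hη2⟩
  · rintro X ⟨hXsub, hXmk⟩
    obtain ⟨η₀, hη₀, hbd⟩ := exists_bound_lt_omega2 hXmk.le (fun ξ hξ => hXsub hξ)
    refine ⟨Set.Iio (max (η₀ + 1) omega1), ⟨max (η₀ + 1) omega1, ⟨le_max_right _ _,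
      max_lt (by simpa using omega2_isLimit.succ_lt hη₀)
        omega1_lt_omega2⟩, rfl⟩, ?_⟩
    intro ξ hξ
    exact lt_of_le_of_lt (hbd ξ hξ) (lt_of_lt_of_le (Order.lt_succ η₀)
      (by simpa using le_max_left (η₀+1) omega1))
  · intro f _ hf
    set E : Set Ordinal.{0} :=
      {η | η ∈ Set.Ico omega1 (Cardinal.aleph 2).ord ∧ ∃ α < omega1, f α = Set.Iio η} with hE
    have hEne : E.Nonempty := by
      obtain ⟨η, hη, hfη⟩ := hf 0 omega1_pos
      exact ⟨η, hη, 0, omega1_pos, hfη.symm⟩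
    have hEbdd : BddAbove E := ⟨(Cardinal.aleph 2).ord, fun η hη => hη.1.2.le⟩
    have hch : ∀ η : E, ∃ α, α < omega1 ∧ f α = Set.Iio (η : Ordinal) := fun η => η.2.2
    have hEmk : Cardinal.mk E ≤ Cardinal.aleph 1 := by
      choose a ha1 ha2 using hch
      have hinj : Function.Injective (fun η : E => (⟨a η, ha1 η⟩ : Set.Iio omega1)) := by
        intro η η' hηη'
        have hv : a η = a η' := congrArg Subtype.val hηη'
        have : f (a η) = f (a η') := by rw [hv]
        rw [ha2 η, ha2 η'] at this
        exact Subtype.ext (Set.Iio_injective this)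
      calc Cardinal.mk E ≤ Cardinal.mk (Set.Iio omega1) := Cardinal.mk_le_of_injective hinj
        _ = Cardinal.aleph 1 := mk_Iio_eq le_rfl omega1_lt_omega2
    obtain ⟨η', hη', hη'b⟩ := exists_bound_lt_omega2 hEmk (fun η hη => hη.1.2)
    have hsup_lt : sSup E < (Cardinal.aleph 2).ord := lt_of_le_of_lt (csSup_le hEne hη'b) hη'
    have hsup_ge : omega1 ≤ sSup E := by
      obtain ⟨η, hη⟩ := hEne
      exact hη.1.1.trans (le_csSup hEbdd hη)
    have hunion : (⋃ α ∈ Set.Iio omega1, f α) = Set.Iio (sSup E) := by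
      apply Set.Subset.antisymm
      · intro ξ hξ
        simp only [Set.mem_iUnion] at hξ
        obtain ⟨α, hα, hξα⟩ := hξ
        obtain ⟨η, hη, hfη⟩ := hf α hα
        rw [← hfη] at hξα
        exact hξα.trans_le (le_csSup hEbdd ⟨hη, α, hα, hfη.symm⟩)
      · intro ξ hξ
        obtain ⟨η, hηE, hlt⟩ := (lt_csSup_iff hEbdd hEne).mp hξ
        obtain ⟨α, hα, hfα⟩ := hηE.2
        simp only [Set.mem_iUnion]
        exact ⟨α, hα, by rw [hfα]; exact hlt⟩
    rw [hunion]
    exact ⟨sSup E, ⟨hsup_ge, hsup_lt⟩, rfl⟩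

lemma mk_Iio_omega2 : Cardinal.mk (Set.Iio (Cardinal.aleph 2).ord) = Cardinal.aleph 2 := by
  rw [Ordinal.mk_Iio_ordinal, Cardinal.card_ord, Cardinal.lift_aleph]
  norm_num

lemma exists_g (η : Ordinal.{0}) (hη : η ∈ Set.Ico omega1 (Cardinal.aleph 2).ord) :
    ∃ g : Ordinal.{0} → Ordinal.{0},
      (∀ β < omega1, g β < η) ∧ (∀ ξ < η, ∃ β < omega1, g β = ξ) := by
  have hmk : Cardinal.mk (Set.Iio omega1) = Cardinal.mk (Set.Iio η) := by
    rw [mk_Iio_eq le_rfl omega1_lt_omega2, mk_Iio_eq hη.1 hη.2]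
  obtain ⟨e⟩ := Cardinal.eq.mp hmk
  refine ⟨fun β => if h : β < omega1 then (e ⟨β, h⟩ : Ordinal) else 0, ?_, ?_⟩
  · intro β hβ
    simp only [dif_pos hβ]
    exact (e ⟨β, hβ⟩).2
  · intro ξ hξ
    refine ⟨(e.symm ⟨ξ, hξ⟩ : Ordinal), (e.symm ⟨ξ, hξ⟩).2, ?_⟩
    have hb : ((e.symm ⟨ξ, hξ⟩ : Set.Iio omega1) : Ordinal) < omega1 := (e.symm ⟨ξ, hξ⟩).2
    simp only [dif_pos hb, Subtype.coe_eta, Equiv.apply_symm_apply]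
    exact congrArg Subtype.val (e.apply_symm_apply ⟨ξ, hξ⟩)

/-- there is a local club `S ⊆ [ω₂]^ω` of cardinality `ℵ₂`, obtained as the
union of clubs `C_η ⊆ [η]^ω` of cardinality `ℵ₁` for `ω₁ ≤ η < ω₂`. -/
theorem exists_localClub_of_size_aleph_two :
    ∃ C : Ordinal.{0} → Set (Set Ordinal.{0}),
      (∀ η, omega1 ≤ η → η < (Cardinal.aleph 2).ord →
        IsClubIn (Set.Iio η) (C η) ∧ Cardinal.mk (C η) = Cardinal.aleph 1) ∧
      (⋃ η ∈ Set.Ico omega1 (Cardinal.aleph 2).ord, C η) ⊆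
        countPow (Set.Iio (Cardinal.aleph 2).ord) ∧
      IsLocalClub (Set.Iio (Cardinal.aleph 2).ord)
        (⋃ η ∈ Set.Ico omega1 (Cardinal.aleph 2).ord, C η) ∧
      Cardinal.mk (⋃ η ∈ Set.Ico omega1 (Cardinal.aleph 2).ord, C η) = Cardinal.aleph 2 := by
  choose! g hg1 hg2 using exists_g
  set C : Ordinal.{0} → Set (Set Ordinal.{0}) := fun η => Cfam (g η) with hC
  have hclub : ∀ η, omega1 ≤ η → η < (Cardinal.aleph 2).ord → IsClubIn (Set.Iio η) (C η) :=
    fun η h1 h2 => isClubIn_Cfam h1 (hg1 η ⟨h1, h2⟩) (hg2 η ⟨h1, h2⟩)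
  set S : Set (Set Ordinal.{0}) := ⋃ η ∈ Set.Ico omega1 (Cardinal.aleph 2).ord, C η with hS
  have hsub : S ⊆ countPow (Set.Iio (Cardinal.aleph 2).ord) := by
    intro x hx
    simp only [hS, Set.mem_iUnion] at hx
    obtain ⟨η, hη, hxη⟩ := hx
    obtain ⟨hxs, hxc, hxg⟩ := (hclub η hη.1 hη.2).1 hxη
    exact ⟨hxs.trans (fun ξ hξ => lt_trans hξ hη.2), hxc, hxg⟩
  refine ⟨C, fun η h1 h2 => ⟨hclub η h1 h2, mk_Cfam⟩, hsub, ?_, ?_⟩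
  · -- local club
    refine ⟨Cstar, isClubAleph1_Cstar, ?_⟩
    rintro _ ⟨η, hη, rfl⟩
    exact ⟨C η, hclub η hη.1 hη.2, Set.subset_biUnion_of_mem hη⟩
  · -- cardinality
    have hub : Cardinal.mk S ≤ Cardinal.aleph 2 := by
      calc Cardinal.mk S ≤ Cardinal.mk (Set.Ico omega1 (Cardinal.aleph 2).ord) *
            ⨆ η : Set.Ico omega1 (Cardinal.aleph 2).ord, Cardinal.mk (C η) :=
          Cardinal.mk_biUnion_le C _
        _ ≤ Cardinal.aleph 2 * Cardinal.aleph 1 := by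
            apply mul_le_mul'
            · exact le_of_le_of_eq (Cardinal.mk_le_mk_of_subset Set.Ico_subset_Iio_self)
                mk_Iio_omega2
            · exact ciSup_le' fun η => le_of_eq mk_Cfam
        _ = Cardinal.aleph 2 := by
            rw [Cardinal.mul_eq_max (aleph0_le_aleph 2) (aleph0_le_aleph 1),
              max_eq_left (aleph_le_aleph.mpr one_le_two)]
    have homega1_mem : omega1 ∈ Set.Ico omega1 (Cardinal.aleph 2).ord :=
      ⟨le_rfl, omega1_lt_omega2⟩
    have hS1 : Cardinal.aleph 1 ≤ Cardinal.mk S := by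
      have := Cardinal.mk_le_mk_of_subset (Set.subset_biUnion_of_mem (u := C) homega1_mem)
      rwa [show Cardinal.mk (C omega1) = Cardinal.aleph 1 from mk_Cfam] at this
    have hcov : Set.Ico omega1 (Cardinal.aleph 2).ord ⊆ ⋃₀ S := by
      intro η hη
      have hmem : η + 1 ∈ Set.Ico omega1 (Cardinal.aleph 2).ord :=
        ⟨hη.1.trans ((Order.le_succ η).trans_eq (Ordinal.add_one_eq_succ η).symm),
          by simpa using omega2_isLimit.succ_lt hη.2⟩
      obtain ⟨β, hβ, hgβ⟩ := hg2 (η + 1) hmem η (by simpa using Order.lt_succ η)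
      refine ⟨xset (g (η + 1)) (β + 1), Set.mem_biUnion hmem ⟨β + 1, succ_lt_omega1 hβ, rfl⟩, ?_⟩
      exact Or.inr ⟨hη.1, β, by simpa using Order.lt_succ β, hgβ⟩
    have hIco : Cardinal.aleph 2 ≤ Cardinal.mk (Set.Ico omega1 (Cardinal.aleph 2).ord) := by
      by_contra h
      push_neg at h
      have h1 : Cardinal.mk (Set.Iio (Cardinal.aleph 2).ord) ≤
          Cardinal.mk (Set.Iio omega1) + Cardinal.mk (Set.Ico omega1 (Cardinal.aleph 2).ord) := by
        rw [← Set.Iio_union_Ico_eq_Iio omega1_lt_omega2.le]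
        exact Cardinal.mk_union_le _ _
      rw [mk_Iio_omega2, mk_Iio_eq le_rfl omega1_lt_omega2] at h1
      exact absurd (lt_of_le_of_lt h1 (Cardinal.add_lt_of_lt (aleph0_le_aleph 2)
        (aleph_lt_aleph.mpr one_lt_two) h)) (lt_irrefl _)
    have hlb : Cardinal.aleph 2 ≤ Cardinal.mk S := by
      have hsup : (⨆ s : S, Cardinal.mk s) ≤ Cardinal.aleph0 :=
        ciSup_le' fun s => Cardinal.mk_le_aleph0_iff.mpr ((hsub s.2).2.1.to_subtype)
      calc Cardinal.aleph 2 ≤ Cardinal.mk (Set.Ico omega1 (Cardinal.aleph 2).ord) := hIco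
        _ ≤ Cardinal.mk (⋃₀ S) := Cardinal.mk_le_mk_of_subset hcov
        _ ≤ Cardinal.mk S * ⨆ s : S, Cardinal.mk s := Cardinal.mk_sUnion_le S
        _ ≤ Cardinal.mk S * Cardinal.aleph0 := mul_le_mul' le_rfl hsup
        _ = Cardinal.mk S := by
            rw [Cardinal.mul_eq_max ((aleph0_le_aleph 1).trans hS1) le_rfl,
              max_eq_left ((aleph0_le_aleph 1).trans hS1)]
    exact le_antisymm hub hlb
end
end
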